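/- arXiv:math/0610073 — 2 statements merged into one kernel-verified Lean document; each statement's English description precedes it below -/
import Mathlib

section
/- Let C be the group on A × B presented by a normalized symmetric 2-cocycle c, and let G be a cyclic subgroup of C of prime order ℓ generated by g = (P₁,P₂) with P₁ ≠ 0. Then the discrete logarithm in G reduces to the discrete logarithm in ⟨P₁⟩ ≤ A: for any h ∈ G and integer x, h = x·g if and only if π(h) = x·P₁, where π is the first projection. -/
/-- The operation on `A × B` presented by a 2-cocycle `c`; this is the group law of the
group `C` presented by `c`. -/
def cocycleOp {A B : Type*} [AddCommGroup A] [AddCommGroup B]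
    (c : A → A → B) (P Q : A × B) : A × B :=
  (P.1 + Q.1, P.2 + Q.2 + c P.1 Q.1)

theorem stmt_14 {A B C : Type*} [AddCommGroup A] [AddCommGroup B] [AddCommGroup C]
    (c : A → A → B)
    (hcoc : ∀ P Q R : A, c P Q + c (P + Q) R = c Q R + c P (Q + R))
    (hsym : ∀ P Q : A, c P Q = c Q P)
    (hnorm : c 0 0 = 0)
    (e : C ≃ A × B)
    (hadd : ∀ x y : C, e (x + y) = cocycleOp c (e x) (e y))
    (hzero : e 0 = ((0 : A), (0 : B)))
    (ℓ : ℕ) (hℓ : ℓ.Prime)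
    (g : C) (P₁ : A) (P₂ : B) (hg : e g = (P₁, P₂)) (hP₁ : P₁ ≠ 0)
    (hord : Nat.card (AddSubgroup.zmultiples g) = ℓ)
    (h : C) (hh : h ∈ AddSubgroup.zmultiples g) :
    ∀ x : ℤ, h = x • g ↔ (e h).1 = x • P₁ := by
  intro x
  let φ : C →+ A :=
    { toFun := fun z => (e z).1
      map_zero' := by simp [hzero]
      map_add' := fun a b => by simp [hadd, cocycleOp] }
  have hφg : φ g = P₁ := by simp [φ, hg]
  have key : ∀ n : ℤ, (e (n • g)).1 = n • P₁ := by
    intro n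
    show φ (n • g) = n • P₁
    rw [map_zsmul, hφg]
  have horder : addOrderOf g = ℓ := by rw [← Nat.card_zmultiples]; exact hord
  have hℓg : (ℓ : ℤ) • g = 0 := by
    rw [← horder, natCast_zsmul, addOrderOf_nsmul_eq_zero]
  have hℓP : (ℓ : ℤ) • P₁ = 0 := by
    have := key (ℓ : ℤ)
    rw [hℓg, hzero] at this
    simpa using this.symm
  have hPord : addOrderOf P₁ = ℓ := by
    have hdvd : addOrderOf P₁ ∣ ℓ := by
      exact_mod_cast addOrderOf_dvd_iff_zsmul_eq_zero.mpr hℓP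
    rcases hℓ.eq_one_or_self_of_dvd _ hdvd with h1 | h2
    · exact absurd (AddMonoid.addOrderOf_eq_one_iff.mp h1) hP₁
    · exact h2
  constructor
  · rintro rfl; exact key x
  · intro hx
    obtain ⟨y, rfl⟩ := hh
    have hyP : y • P₁ = x • P₁ := by rw [← key y]; exact hx
    have h0 : (y - x) • P₁ = 0 := by rw [sub_smul, hyP, sub_self]
    have hdvd : (addOrderOf g : ℤ) ∣ (y - x) := by
      rw [horder, ← hPord]
      exact addOrderOf_dvd_iff_zsmul_eq_zero.mpr h0
    have hg0 : (y - x) • g = 0 := addOrderOf_dvd_iff_zsmul_eq_zero.mp hdvd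
    have : y • g = x • g := by
      rw [← sub_eq_zero, ← sub_smul]; exact hg0
    simpa using this
end

section
/- Let G be a finite cyclic group whose order n = p·q is a product of two coprime positive integers. Then the discrete logarithm in G reduces to discrete logarithms in its subgroups of orders p and q: if g generates G, then for any h ∈ G and exponents a, b with h^q = (g^q)^a in the subgroup of order p and h^p = (g^p)^b in the subgroup of order q, the unique x mod n with x ≡ a mod p and x ≡ b mod q satisfies h = g^x. -/
/-!
Write `h = g ^ m`. Since `g` has order `p * q`, the hypothesis `h ^ q = (g ^ q) ^ a` says
`m * q ≡ a * q [MOD p * q]`, hence `m ≡ a [MOD p]`; symmetrically `m ≡ b [MOD q]`, and the Chinese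
remainder theorem turns these two congruences into `m ≡ x [MOD p * q]`.
-/

theorem Nat.ModEq.of_pow_pow_eq_pow_pow {M : Type*} [LeftCancelMonoid M] {g : M} {p q m a : ℕ}
    (hg : orderOf g = p * q) (hpq : p.Coprime q) (h : (g ^ m) ^ q = (g ^ q) ^ a) :
    m ≡ a [MOD p] := by
  rw [← pow_mul, ← pow_mul, pow_eq_pow_iff_modEq, hg, mul_comm q a] at h
  exact (h.of_mul_right q).cancel_right_of_coprime hpq

theorem stmt_17_general {G : Type*} [Group G] [Finite G]
    (p q : ℕ) (hpq : Nat.Coprime p q)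
    (hcard : Nat.card G = p * q)
    (g : G) (hg : ∀ y : G, y ∈ Subgroup.zpowers g)
    (h : G) (a b x : ℕ)
    (ha : h ^ q = (g ^ q) ^ a) (hb : h ^ p = (g ^ p) ^ b)
    (hxa : x ≡ a [MOD p]) (hxb : x ≡ b [MOD q]) :
    h = g ^ x := by
  have horder : orderOf g = p * q := hcard ▸ orderOf_eq_card_of_forall_mem_zpowers hg
  obtain ⟨m, rfl⟩ := mem_powers_iff_mem_zpowers.2 (hg h)
  have hma : m ≡ a [MOD p] := .of_pow_pow_eq_pow_pow horder hpq ha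
  have hmb : m ≡ b [MOD q] := .of_pow_pow_eq_pow_pow (horder.trans (mul_comm p q)) hpq.symm hb
  rw [pow_eq_pow_iff_modEq, horder, ← Nat.modEq_and_modEq_iff_modEq_mul hpq]
  exact ⟨hma.trans hxa.symm, hmb.trans hxb.symm⟩

theorem stmt_17 {G : Type*} [Group G] [Finite G]
    (p q : ℕ) (hp : 0 < p) (hq : 0 < q) (hpq : Nat.Coprime p q)
    (hcard : Nat.card G = p * q)
    (g : G) (hg : ∀ y : G, y ∈ Subgroup.zpowers g)
    (h : G) (a b x : ℕ)
    (ha : h ^ q = (g ^ q) ^ a) (hb : h ^ p = (g ^ p) ^ b)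
    (hxa : x ≡ a [MOD p]) (hxb : x ≡ b [MOD q]) :
    h = g ^ x :=
  stmt_17_general p q hpq hcard g hg h a b x ha hb hxa hxb
end
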